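/- arXiv:2509.03784 — 2 statements merged into one kernel-verified Lean document; each statement's English description precedes it below -/
import Mathlib

section
/- There exists a 3-coloring of the edges of K_14 containing no 5-cycle in the first color and no 6-cycle in either of the other two colors; hence R(C_5, C_6, C_6) ≥ 15. -/
open SimpleGraph

/-- `HasCopy H G` means the graph `H` contains a (not necessarily induced) copy of `G`. -/
def HasCopy {α β : Type*} (H : SimpleGraph α) (G : SimpleGraph β) : Prop :=
  ∃ f : β ↪ α, ∀ a b, G.Adj a b → H.Adj (f a) (f b)

/-- The graph consisting of the edges assigned color `i` by the edge coloring `c`. -/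
def colorGraph {V : Type*} {k : ℕ} (c : Sym2 V → Fin k) (i : Fin k) : SimpleGraph V :=
  SimpleGraph.fromRel (fun a b => c s(a, b) = i)

/-- Side of the bipartition of the 14 vertices. -/
def pp (v : Fin 14) : Bool := v.val < 7

/-- Whether the vertex is in the "small part" {0,1,7,8}. -/
def sm (v : Fin 14) : Bool := v.val % 7 < 2

/-- The coloring as a symmetric function of two vertices. -/
def col (a b : Fin 14) : Fin 3 :=
  if pp a = pp b then (if sm a = sm b then 1 else 2) else 0

lemma col_symm (a b : Fin 14) : col a b = col b a := by
  unfold col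
  by_cases h1 : pp a = pp b <;> by_cases h2 : sm a = sm b <;>
    simp only [h1, h2, if_pos rfl, if_neg, eq_comm]

def myc : Sym2 (Fin 14) → Fin 3 := Sym2.lift ⟨col, col_symm⟩

lemma adj_col {i : Fin 3} {a b : Fin 14} (h : (colorGraph myc i).Adj a b) :
    col a b = i := by
  rcases h.2 with h | h
  · simpa [myc] using h
  · rw [col_symm]; simpa [myc] using h

lemma adj0 {a b : Fin 14} (h : (colorGraph myc 0).Adj a b) : pp a ≠ pp b := by
  have := adj_col h
  unfold col at this
  split_ifs at this with h1 h2 <;> simp_all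

lemma adj1 {a b : Fin 14} (h : (colorGraph myc 1).Adj a b) :
    pp a = pp b ∧ sm a = sm b := by
  have := adj_col h
  unfold col at this
  split_ifs at this with h1 h2 <;> simp_all

lemma adj2 {a b : Fin 14} (h : (colorGraph myc 2).Adj a b) :
    pp a = pp b ∧ sm a ≠ sm b := by
  have := adj_col h
  unfold col at this
  split_ifs at this with h1 h2 <;> simp_all

/-- There is a 3-coloring of the edges of `K₁₄` with no 5-cycle in color 0 and no 6-cycle
in colors 1 and 2; hence `R(C₅, C₆, C₆) ≥ 15`. -/
theorem ramsey_C5_C6_C6_ge_15 :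
    ∃ c : Sym2 (Fin 14) → Fin 3,
      ¬ HasCopy (colorGraph c 0) (SimpleGraph.cycleGraph 5) ∧
      ¬ HasCopy (colorGraph c 1) (SimpleGraph.cycleGraph 6) ∧
      ¬ HasCopy (colorGraph c 2) (SimpleGraph.cycleGraph 6) := by
  refine ⟨myc, ?_, ?_, ?_⟩
  · -- color 0 is bipartite, hence has no odd cycle C₅
    rintro ⟨f, hf⟩
    have h01 := adj0 (hf 0 1 (by decide))
    have h12 := adj0 (hf 1 2 (by decide))
    have h23 := adj0 (hf 2 3 (by decide))
    have h34 := adj0 (hf 3 4 (by decide))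
    have h40 := adj0 (hf 4 0 (by decide))
    revert h01 h12 h23 h34 h40
    cases pp (f 0) <;> cases pp (f 1) <;> cases pp (f 2) <;> cases pp (f 3) <;>
      cases pp (f 4) <;> simp
  · -- color 1 has components of size at most 5, hence no C₆
    rintro ⟨f, hf⟩
    have h01 := adj1 (hf 0 1 (by decide))
    have h12 := adj1 (hf 1 2 (by decide))
    have h23 := adj1 (hf 2 3 (by decide))
    have h34 := adj1 (hf 3 4 (by decide))
    have h45 := adj1 (hf 4 5 (by decide))
    have hsub : (Finset.univ : Finset (Fin 6)).map f ⊆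
        Finset.univ.filter (fun v => pp v = pp (f 0) ∧ sm v = sm (f 0)) := by
      intro v hv
      simp only [Finset.mem_map, Finset.mem_univ, true_and] at hv
      obtain ⟨i, _, rfl⟩ := hv
      simp only [Finset.mem_filter, Finset.mem_univ, true_and]
      fin_cases i <;> simp_all
    have hcard := Finset.card_le_card hsub
    rw [Finset.card_map] at hcard
    have h5 : ∀ x y : Bool,
        (Finset.univ.filter (fun v : Fin 14 => pp v = x ∧ sm v = y)).card ≤ 5 := by decide
    have := h5 (pp (f 0)) (sm (f 0))
    simp at hcard
    omega
  · -- color 2 is a union of two K_{2,5}'s; cycles have length at most 4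
    rintro ⟨f, hf⟩
    have h01 := adj2 (hf 0 1 (by decide))
    have h12 := adj2 (hf 1 2 (by decide))
    have h23 := adj2 (hf 2 3 (by decide))
    have h34 := adj2 (hf 3 4 (by decide))
    have h45 := adj2 (hf 4 5 (by decide))
    have h2' : ∀ x : Bool,
        (Finset.univ.filter (fun v : Fin 14 => pp v = x ∧ sm v = true)).card ≤ 2 := by decide
    cases hs0 : sm (f 0) with
    | true =>
      have hsub : ({0, 2, 4} : Finset (Fin 6)).map f ⊆
          Finset.univ.filter (fun v => pp v = pp (f 0) ∧ sm v = true) := by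
        intro v hv
        simp only [Finset.mem_map] at hv
        obtain ⟨i, hi, rfl⟩ := hv
        simp only [Finset.mem_filter, Finset.mem_univ, true_and]
        fin_cases hi <;> simp_all
      have hcard := Finset.card_le_card hsub
      rw [Finset.card_map] at hcard
      have := h2' (pp (f 0))
      have h3 : ({0, 2, 4} : Finset (Fin 6)).card = 3 := by decide
      omega
    | false =>
      have hsub : ({1, 3, 5} : Finset (Fin 6)).map f ⊆
          Finset.univ.filter (fun v => pp v = pp (f 0) ∧ sm v = true) := by
        intro v hv
        simp only [Finset.mem_map] at hv
        obtain ⟨i, hi, rfl⟩ := hv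
        simp only [Finset.mem_filter, Finset.mem_univ, true_and]
        fin_cases hi <;> simp_all
      have hcard := Finset.card_le_card hsub
      rw [Finset.card_map] at hcard
      have := h2' (pp (f 0))
      have h3 : ({1, 3, 5} : Finset (Fin 6)).card = 3 := by decide
      omega
end

section
/- Every 2-coloring of the edges of K_9 contains a triangle in the first color or a K_4 in the second color; i.e., R(K_3, K_4) ≤ 9. -/
open SimpleGraph

lemma cg_adj {V : Type*} {k : ℕ} (c : Sym2 V → Fin k) (i : Fin k) (a b : V) :
    (colorGraph c i).Adj a b ↔ a ≠ b ∧ c s(a, b) = i := by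
  constructor
  · rintro ⟨hne, h | h⟩
    · exact ⟨hne, h⟩
    · exact ⟨hne, by rwa [Sym2.eq_swap]⟩
  · rintro ⟨hne, h⟩
    exact ⟨hne, Or.inl h⟩

instance {V : Type*} [DecidableEq V] {k : ℕ} (c : Sym2 V → Fin k) (i : Fin k) :
    DecidableRel (colorGraph c i).Adj :=
  fun a b => decidable_of_iff _ (cg_adj c i a b).symm

lemma fin2 (x : Fin 2) : x = 0 ∨ x = 1 :=
  match x with
  | 0 => Or.inl rfl
  | 1 => Or.inr rfl

lemma exists_three {s : Finset (Fin 9)} (h : 3 ≤ s.card) :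
    ∃ x y z : Fin 9, x ≠ y ∧ x ≠ z ∧ y ≠ z ∧ x ∈ s ∧ y ∈ s ∧ z ∈ s := by
  obtain ⟨t, hts, htc⟩ := Finset.exists_subset_card_eq h
  obtain ⟨x, y, z, hxy, hxz, hyz, rfl⟩ := Finset.card_eq_three.mp htc
  exact ⟨x, y, z, hxy, hxz, hyz, hts (by simp), hts (by simp), hts (by simp)⟩

lemma exists_four {s : Finset (Fin 9)} (h : 4 ≤ s.card) :
    ∃ a x y z : Fin 9, a ≠ x ∧ a ≠ y ∧ a ≠ z ∧ x ≠ y ∧ x ≠ z ∧ y ≠ z ∧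
      a ∈ s ∧ x ∈ s ∧ y ∈ s ∧ z ∈ s := by
  obtain ⟨a, ha⟩ := Finset.card_pos.mp (by omega : 0 < s.card)
  have h3 : 3 ≤ (s.erase a).card := by
    have := Finset.card_erase_of_mem ha; omega
  obtain ⟨x, y, z, hxy, hxz, hyz, hx, hy, hz⟩ := exists_three h3
  exact ⟨a, x, y, z, (Finset.ne_of_mem_erase hx).symm, (Finset.ne_of_mem_erase hy).symm,
    (Finset.ne_of_mem_erase hz).symm, hxy, hxz, hyz, ha,
    Finset.mem_of_mem_erase hx, Finset.mem_of_mem_erase hy, Finset.mem_of_mem_erase hz⟩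

lemma copy3 {H : SimpleGraph (Fin 9)} {x y z : Fin 9}
    (hxy : H.Adj x y) (hxz : H.Adj x z) (hyz : H.Adj y z) :
    HasCopy H (⊤ : SimpleGraph (Fin 3)) := by
  refine ⟨⟨![x, y, z], ?_⟩, ?_⟩
  · intro a b hab
    fin_cases a <;> fin_cases b <;>
      simp_all [hxy.ne, hxz.ne, hyz.ne, hxy.ne', hxz.ne', hyz.ne']
  · intro a b hab
    have hne : a ≠ b := hab.ne
    fin_cases a <;> fin_cases b <;> simp_all <;>
      first
        | exact hxy | exact hxz | exact hyz
        | exact hxy.symm | exact hxz.symm | exact hyz.symm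

lemma copy4 {H : SimpleGraph (Fin 9)} {w x y z : Fin 9}
    (hwx : H.Adj w x) (hwy : H.Adj w y) (hwz : H.Adj w z)
    (hxy : H.Adj x y) (hxz : H.Adj x z) (hyz : H.Adj y z) :
    HasCopy H (⊤ : SimpleGraph (Fin 4)) := by
  refine ⟨⟨![w, x, y, z], ?_⟩, ?_⟩
  · intro a b hab
    fin_cases a <;> fin_cases b <;>
      simp_all [hwx.ne, hwy.ne, hwz.ne, hxy.ne, hxz.ne, hyz.ne,
        hwx.ne', hwy.ne', hwz.ne', hxy.ne', hxz.ne', hyz.ne']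
  · intro a b hab
    have hne : a ≠ b := hab.ne
    fin_cases a <;> fin_cases b <;> simp_all <;>
      first
        | exact hwx | exact hwy | exact hwz | exact hxy | exact hxz | exact hyz
        | exact hwx.symm | exact hwy.symm | exact hwz.symm
        | exact hxy.symm | exact hxz.symm | exact hyz.symm

/-- Every 2-coloring of the edges of `K₉` contains a triangle in color 0 or a `K₄` in
color 1; i.e. `R(K₃, K₄) ≤ 9`. -/
theorem ramsey_K3_K4_le_9 :
    ∀ c : Sym2 (Fin 9) → Fin 2,
      HasCopy (colorGraph c 0) (⊤ : SimpleGraph (Fin 3)) ∨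
      HasCopy (colorGraph c 1) (⊤ : SimpleGraph (Fin 4)) := by
  intro c
  by_contra hcon
  push_neg at hcon
  obtain ⟨h3, h4⟩ := hcon
  have sw : ∀ a b : Fin 9, c s(a, b) = c s(b, a) := fun a b => by rw [Sym2.eq_swap]
  have tri : ∀ x y z : Fin 9, x ≠ y → x ≠ z → y ≠ z →
      c s(x, y) = 0 → c s(x, z) = 0 → c s(y, z) = 0 → False := by
    intro x y z hxy hxz hyz c1 c2 c3
    exact h3 (copy3 ((cg_adj c 0 x y).mpr ⟨hxy, c1⟩) ((cg_adj c 0 x z).mpr ⟨hxz, c2⟩)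
      ((cg_adj c 0 y z).mpr ⟨hyz, c3⟩))
  have k4 : ∀ w x y z : Fin 9, w ≠ x → w ≠ y → w ≠ z → x ≠ y → x ≠ z → y ≠ z →
      c s(w, x) = 1 → c s(w, y) = 1 → c s(w, z) = 1 →
      c s(x, y) = 1 → c s(x, z) = 1 → c s(y, z) = 1 → False := by
    intro w x y z h1 h2 h5 h6 h7 h8 c1 c2 c3 c4 c5 c6
    exact h4 (copy4 ((cg_adj c 1 w x).mpr ⟨h1, c1⟩) ((cg_adj c 1 w y).mpr ⟨h2, c2⟩)
      ((cg_adj c 1 w z).mpr ⟨h5, c3⟩) ((cg_adj c 1 x y).mpr ⟨h6, c4⟩)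
      ((cg_adj c 1 x z).mpr ⟨h7, c5⟩) ((cg_adj c 1 y z).mpr ⟨h8, c6⟩))
  -- every vertex has color-0 degree at most 3
  have degle : ∀ v : Fin 9, (colorGraph c 0).degree v ≤ 3 := by
    intro v
    by_contra hd
    push_neg at hd
    have h4c : 4 ≤ ((colorGraph c 0).neighborFinset v).card := hd
    obtain ⟨a, x, y, z, hax, hay, haz, hxy, hxz, hyz, ha, hx, hy, hz⟩ := exists_four h4c
    rw [SimpleGraph.mem_neighborFinset, cg_adj] at ha hx hy hz
    by_cases p1 : c s(a, x) = 0
    · exact tri v a x ha.1 hx.1 hax ha.2 hx.2 p1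
    by_cases p2 : c s(a, y) = 0
    · exact tri v a y ha.1 hy.1 hay ha.2 hy.2 p2
    by_cases p3 : c s(a, z) = 0
    · exact tri v a z ha.1 hz.1 haz ha.2 hz.2 p3
    by_cases p4 : c s(x, y) = 0
    · exact tri v x y hx.1 hy.1 hxy hx.2 hy.2 p4
    by_cases p5 : c s(x, z) = 0
    · exact tri v x z hx.1 hz.1 hxz hx.2 hz.2 p5
    by_cases p6 : c s(y, z) = 0
    · exact tri v y z hy.1 hz.1 hyz hy.2 hz.2 p6
    exact k4 a x y z hax hay haz hxy hxz hyz
      ((fin2 _).resolve_left p1) ((fin2 _).resolve_left p2) ((fin2 _).resolve_left p3)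
      ((fin2 _).resolve_left p4) ((fin2 _).resolve_left p5) ((fin2 _).resolve_left p6)
  -- degree sum
  have degsum : ∀ v : Fin 9,
      (colorGraph c 0).degree v + (colorGraph c 1).degree v = 8 := by
    intro v
    have hunion : (colorGraph c 0).neighborFinset v ∪ (colorGraph c 1).neighborFinset v
        = Finset.univ.erase v := by
      ext u
      simp only [Finset.mem_union, SimpleGraph.mem_neighborFinset, cg_adj,
        Finset.mem_erase, Finset.mem_univ, and_true]
      constructor
      · rintro (⟨h, _⟩ | ⟨h, _⟩) <;> exact h.symm
      · intro h
        rcases fin2 (c s(v, u)) with h0 | h1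
        · exact Or.inl ⟨h.symm, h0⟩
        · exact Or.inr ⟨h.symm, h1⟩
    have hdisj : Disjoint ((colorGraph c 0).neighborFinset v)
        ((colorGraph c 1).neighborFinset v) := by
      rw [Finset.disjoint_left]
      intro u hu hu'
      rw [SimpleGraph.mem_neighborFinset, cg_adj] at hu hu'
      rw [hu.2] at hu'
      exact absurd hu'.2 (by decide)
    have := Finset.card_union_of_disjoint hdisj
    rw [hunion, Finset.card_erase_of_mem (Finset.mem_univ v)] at this
    simp only [Finset.card_univ, Fintype.card_fin] at this
    unfold SimpleGraph.degree
    omega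
  -- every vertex has color-0 degree at least 3
  have degge : ∀ v : Fin 9, 3 ≤ (colorGraph c 0).degree v := by
    intro v
    by_contra hd
    push_neg at hd
    have h6 : 6 ≤ ((colorGraph c 1).neighborFinset v).card := by
      have h8 := degsum v
      unfold SimpleGraph.degree at h8 hd
      omega
    obtain ⟨a, haS⟩ := Finset.card_pos.mp (by omega : 0 < ((colorGraph c 1).neighborFinset v).card)
    have hva : v ≠ a ∧ c s(v, a) = 1 := by
      have := (SimpleGraph.mem_neighborFinset _ _ _).mp haS
      exact (cg_adj c 1 v a).mp this
    set T : Finset (Fin 9) := ((colorGraph c 1).neighborFinset v).erase a with hT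
    have hTc : 5 ≤ T.card := by
      rw [hT, Finset.card_erase_of_mem haS]; omega
    have memT : ∀ u ∈ T, u ≠ a ∧ v ≠ u ∧ c s(v, u) = 1 := by
      intro u hu
      refine ⟨Finset.ne_of_mem_erase hu, ?_⟩
      have := (SimpleGraph.mem_neighborFinset _ _ _).mp (Finset.mem_of_mem_erase hu)
      exact (cg_adj c 1 v u).mp this
    have hsplit : (T.filter (fun u => c s(a, u) = 0)).card
        + (T.filter (fun u => c s(a, u) = 1)).card = T.card := by
      have hpart := Finset.card_filter_add_card_filter_not
        (s := T) (p := fun u => c s(a, u) = 0)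
      have heq : T.filter (fun u => ¬ c s(a, u) = 0) = T.filter (fun u => c s(a, u) = 1) := by
        apply Finset.filter_congr
        intro u _
        rcases fin2 (c s(a, u)) with h0 | h1
        · simp [h0]
        · simp [h1]
      rw [heq] at hpart
      exact hpart
    rcases (by omega : 3 ≤ (T.filter (fun u => c s(a, u) = 0)).card
        ∨ 3 ≤ (T.filter (fun u => c s(a, u) = 1)).card) with hc | hc
    · obtain ⟨x, y, z, hxy, hxz, hyz, hx, hy, hz⟩ := exists_three hc
      rw [Finset.mem_filter] at hx hy hz
      obtain ⟨hxT, hxc⟩ := hx; obtain ⟨hyT, hyc⟩ := hy; obtain ⟨hzT, hzc⟩ := hz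
      obtain ⟨hxa, hvx, hvx1⟩ := memT x hxT
      obtain ⟨hya, hvy, hvy1⟩ := memT y hyT
      obtain ⟨hza, hvz, hvz1⟩ := memT z hzT
      by_cases q1 : c s(x, y) = 0
      · exact tri a x y (Ne.symm hxa) (Ne.symm hya) hxy hxc hyc q1
      by_cases q2 : c s(x, z) = 0
      · exact tri a x z (Ne.symm hxa) (Ne.symm hza) hxz hxc hzc q2
      by_cases q3 : c s(y, z) = 0
      · exact tri a y z (Ne.symm hya) (Ne.symm hza) hyz hyc hzc q3
      exact k4 v x y z hvx hvy hvz hxy hxz hyz hvx1 hvy1 hvz1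
        ((fin2 _).resolve_left q1) ((fin2 _).resolve_left q2) ((fin2 _).resolve_left q3)
    · obtain ⟨x, y, z, hxy, hxz, hyz, hx, hy, hz⟩ := exists_three hc
      rw [Finset.mem_filter] at hx hy hz
      obtain ⟨hxT, hxc⟩ := hx; obtain ⟨hyT, hyc⟩ := hy; obtain ⟨hzT, hzc⟩ := hz
      obtain ⟨hxa, hvx, hvx1⟩ := memT x hxT
      obtain ⟨hya, hvy, hvy1⟩ := memT y hyT
      obtain ⟨hza, hvz, hvz1⟩ := memT z hzT
      by_cases q1 : c s(x, y) = 1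
      · exact k4 v a x y hva.1 hvx hvy (Ne.symm hxa) (Ne.symm hya) hxy
          hva.2 hvx1 hvy1 hxc hyc q1
      by_cases q2 : c s(x, z) = 1
      · exact k4 v a x z hva.1 hvx hvz (Ne.symm hxa) (Ne.symm hza) hxz
          hva.2 hvx1 hvz1 hxc hzc q2
      by_cases q3 : c s(y, z) = 1
      · exact k4 v a y z hva.1 hvy hvz (Ne.symm hya) (Ne.symm hza) hyz
          hva.2 hvy1 hvz1 hyc hzc q3
      exact tri x y z hxy hxz hyz
        ((fin2 _).resolve_right q1) ((fin2 _).resolve_right q2) ((fin2 _).resolve_right q3)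
  -- handshake contradiction
  have hsum : ∑ v : Fin 9, (colorGraph c 0).degree v = 27 := by
    have : ∀ v : Fin 9, (colorGraph c 0).degree v = 3 :=
      fun v => le_antisymm (degle v) (degge v)
    simp [this]
  have := SimpleGraph.sum_degrees_eq_twice_card_edges (colorGraph c 0)
  rw [hsum] at this
  omega
end
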